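/- Let r be a real number, T > 0, t ∈ (0,T), and w > 0. For V > 0 and B > 0 define the default-probability expression q(V,B) = Φ((log(B/V) − r(T−t) + w/2)/√w). Then for any additional debt B' > 0: (i) if V > B, then q(V,B) < q(V + B', B + B'); (ii) if V < B, then q(V,B) > q(V + B', B + B'). -/
import Mathlib


open Real Set Filter

/-- The standard normal cumulative distribution function. -/
noncomputable def Phi (x : ℝ) : ℝ :=
  (Real.sqrt (2 * Real.pi))⁻¹ * ∫ y in Set.Iic x, Real.exp (-(y ^ 2) / 2)

lemma gauss_integrable : MeasureTheory.Integrable (fun y : ℝ => Real.exp (-(y ^ 2) / 2)) := by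
  have h := integrable_exp_neg_mul_sq (b := (1/2 : ℝ)) (by norm_num)
  convert h using 2 with y
  ring_nf

lemma Phi_strictMono : StrictMono Phi := by
  intro a b hab
  unfold Phi
  have hc : 0 < (Real.sqrt (2 * Real.pi))⁻¹ := by
    positivity
  apply mul_lt_mul_of_pos_left _ hc
  have hint : ∀ s : Set ℝ, MeasureTheory.IntegrableOn (fun y : ℝ => Real.exp (-(y ^ 2) / 2)) s :=
    fun s => gauss_integrable.integrableOn
  have hsplit : Set.Iic b = Set.Iic a ∪ Set.Ioc a b := (Set.Iic_union_Ioc_eq_Iic hab.le).symm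
  rw [hsplit, MeasureTheory.setIntegral_union (Set.Iic_disjoint_Ioc le_rfl)
    measurableSet_Ioc (hint _) (hint _)]
  have hpos : 0 < ∫ y in Set.Ioc a b, Real.exp (-(y ^ 2) / 2) := by
    apply MeasureTheory.setIntegral_pos_iff_support_of_nonneg_ae _ (hint _) |>.2
    · have hsupp : (Function.support fun y : ℝ => Real.exp (-(y ^ 2) / 2)) = Set.univ := by
        ext y; simp [Function.support, (Real.exp_pos _).ne']
      rw [hsupp, Set.univ_inter, Real.volume_Ioc]
      simp [ENNReal.ofReal_pos, sub_pos.2 hab]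
    · filter_upwards with y using (Real.exp_pos _).le
  linarith

/-- impact of an additional debt `B'` on the default probability
`q(V,B) = Φ((log(B/V) - r(T-t) + w/2)/√w)`:
(i) if `V > B` then the default probability strictly increases;
(ii) if `V < B` then it strictly decreases. -/
theorem additional_debt_default_probability
    (r T t w : ℝ) (hT : 0 < T) (ht : t ∈ Set.Ioo (0 : ℝ) T) (hw : 0 < w)
    (q : ℝ → ℝ → ℝ)
    (hq : ∀ V B, q V B =
      Phi ((Real.log (B / V) - r * (T - t) + w / 2) / Real.sqrt w)) :
    ∀ V B B' : ℝ, 0 < V → 0 < B → 0 < B' →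
      (B < V → q V B < q (V + B') (B + B')) ∧
      (V < B → q (V + B') (B + B') < q V B) := by
  intro V B B' hV hB hB'
  have hsw : 0 < Real.sqrt w := Real.sqrt_pos.2 hw
  have main : ∀ x y : ℝ, x < y →
      Phi ((x - r * (T - t) + w / 2) / Real.sqrt w) <
      Phi ((y - r * (T - t) + w / 2) / Real.sqrt w) := by
    intro x y hxy
    exact Phi_strictMono (by apply div_lt_div_of_pos_right (by linarith) hsw)
  constructor
  · intro hBV
    rw [hq, hq]
    apply main
    apply Real.log_lt_log (by positivity)
    rw [div_lt_div_iff₀ hV (by linarith)]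
    nlinarith
  · intro hVB
    rw [hq, hq]
    apply main
    apply Real.log_lt_log (by positivity)
    rw [div_lt_div_iff₀ (by linarith) hV]
    nlinarith
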